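/- Define f₀ : ℝ² → ℝ by f₀(θ₁, θ₂) = (7/24 + (cos θ₁ + cos θ₂)/12 + (cos θ₁ · cos θ₂)/24)·(4 − 2cos θ₁ − 2cos θ₂). Then the infimum over ω ∈ ℝ of sup_{θ ∈ T^H} |1 − ω·f₀(θ)| equals 7/25, and this infimum is attained at ω = 24/25. -/

import Mathlib

/-!
On `T^H` one of the two cosines is nonpositive, and there `f₀` ranges exactly over `[3/4, 4/3]`,
with both ends attained (at `(π/2, 0)` and `(π, π)`). Since `t ↦ |1 - ω t|` is convex, the smoothing
factor is `max |1 - 3ω/4| |1 - 4ω/3|`, which is minimised where the two terms balance,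
at `ω = 24/25`, with value `7/25`.
-/

open Real

/-- The high-frequency set `T^H = [−π/2, 3π/2)² \ [−π/2, π/2)²`. -/
def TH : Set (ℝ × ℝ) :=
  (Set.Ico (-(π/2)) (3*π/2) ×ˢ Set.Ico (-(π/2)) (3*π/2)) \
    (Set.Ico (-(π/2)) (π/2) ×ˢ Set.Ico (-(π/2)) (π/2))

noncomputable def f0 (θ : ℝ × ℝ) : ℝ :=
  (7/24 + (Real.cos θ.1 + Real.cos θ.2)/12 + (Real.cos θ.1 * Real.cos θ.2)/24) *
    (4 - 2 * Real.cos θ.1 - 2 * Real.cos θ.2)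

/-- The LFA smoothing factor of the Vanka relaxation with parameter ω. -/
noncomputable def smoothingFactor (ω : ℝ) : ℝ :=
  sSup ((fun θ => |1 - ω * f0 θ|) '' TH)

open Set

theorem cos_nonpos_fst_or_snd_of_mem_TH {θ : ℝ × ℝ} (hθ : θ ∈ TH) :
    cos θ.1 ≤ 0 ∨ cos θ.2 ≤ 0 := by
  obtain ⟨⟨⟨h₁, h₁'⟩, ⟨h₂, h₂'⟩⟩, hlow⟩ := hθ
  by_cases hfst : θ.1 < π / 2
  · have hsnd : π / 2 ≤ θ.2 := by
      by_contra! hsnd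
      exact hlow ⟨⟨h₁, hfst⟩, ⟨h₂, hsnd⟩⟩
    exact Or.inr (cos_nonpos_of_pi_div_two_le_of_le hsnd (by linarith))
  · exact Or.inl (cos_nonpos_of_pi_div_two_le_of_le (not_lt.1 hfst) (by linarith))

theorem f0_eq (θ : ℝ × ℝ) :
    f0 θ = (7 + 2 * (cos θ.1 + cos θ.2) + cos θ.1 * cos θ.2) * (2 - cos θ.1 - cos θ.2) / 12 := by
  unfold f0
  ring

theorem cubic_mem_Icc_nine_sixteen {x y : ℝ} (hx : x ∈ Icc (-1) 1) (hy : y ∈ Icc (-1) 1)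
    (hxy : x ≤ 0 ∨ y ≤ 0) : (7 + 2 * (x + y) + x * y) * (2 - x - y) ∈ Icc 9 16 := by
  wlog hy₀ : y ≤ 0 generalizing x y
  · have := this hy hx hxy.symm (hxy.resolve_right hy₀)
    rwa [add_comm y, mul_comm y, sub_sub, add_comm y, ← sub_sub] at this
  obtain ⟨hx₁, hx₂⟩ := hx
  obtain ⟨hy₁, -⟩ := hy
  have hprod : 0 ≤ (1 - x) * -y := mul_nonneg (by linarith) (by linarith)
  have hprod' : 0 ≤ (x + 1) * (y + 1) := mul_nonneg (by linarith) (by linarith)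
  constructor
  · nlinarith [sq_nonneg (x + y), sq_nonneg (x - y), sq_nonneg ((1 - x) * -y)]
  · nlinarith [sq_nonneg (x + y + 2), sq_nonneg (x - y), sq_nonneg (x + 1), sq_nonneg (y + 1)]

theorem f0_mem_Icc_of_mem_TH {θ : ℝ × ℝ} (hθ : θ ∈ TH) : f0 θ ∈ Icc (3 / 4) (4 / 3) := by
  have hpoly := cubic_mem_Icc_nine_sixteen ⟨neg_one_le_cos θ.1, cos_le_one θ.1⟩
    ⟨neg_one_le_cos θ.2, cos_le_one θ.2⟩ (cos_nonpos_fst_or_snd_of_mem_TH hθ)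
  rw [f0_eq]
  constructor <;> linarith [hpoly.1, hpoly.2]

theorem pi_div_two_zero_mem_TH : (π / 2, (0 : ℝ)) ∈ TH := by
  have := pi_pos
  exact ⟨⟨⟨by linarith, by linarith⟩, ⟨by linarith, by linarith⟩⟩, fun h => (lt_irrefl _ h.1.2)⟩

theorem pi_pi_mem_TH : (π, π) ∈ TH := by
  have := pi_pos
  exact ⟨⟨⟨by linarith, by linarith⟩, ⟨by linarith, by linarith⟩⟩, fun h => by linarith [h.1.2]⟩

theorem f0_pi_div_two_zero : f0 (π / 2, 0) = 3 / 4 := by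
  norm_num [f0]

theorem f0_pi_pi : f0 (π, π) = 4 / 3 := by
  norm_num [f0]

theorem abs_one_sub_mul_le_max {a b t : ℝ} (ω : ℝ) (ht : t ∈ Icc a b) :
    |1 - ω * t| ≤ max |1 - ω * a| |1 - ω * b| := by
  rcases le_total 0 ω with hω | hω
  · rw [max_comm]
    exact abs_le_max_abs_abs (by nlinarith [ht.2]) (by nlinarith [ht.1])
  · exact abs_le_max_abs_abs (by nlinarith [ht.1]) (by nlinarith [ht.2])

theorem sSup_image_abs_one_sub_mul {α : Type*} {s : Set α} {g : α → ℝ} {a b : ℝ} (ω : ℝ)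
    (hg : ∀ x ∈ s, g x ∈ Icc a b) (ha : a ∈ g '' s) (hb : b ∈ g '' s) :
    sSup ((fun x => |1 - ω * g x|) '' s) = max |1 - ω * a| |1 - ω * b| := by
  refine IsGreatest.csSup_eq ⟨?_, ?_⟩
  · obtain ⟨xa, hxa, rfl⟩ := ha
    obtain ⟨xb, hxb, rfl⟩ := hb
    rcases max_choice |1 - ω * g xa| |1 - ω * g xb| with h | h <;> rw [h]
    exacts [mem_image_of_mem _ hxa, mem_image_of_mem _ hxb]
  · rintro _ ⟨x, hx, rfl⟩
    exact abs_one_sub_mul_le_max ω (hg x hx)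

theorem smoothingFactor_eq (ω : ℝ) :
    smoothingFactor ω = max |1 - ω * (3 / 4)| |1 - ω * (4 / 3)| :=
  sSup_image_abs_one_sub_mul ω (fun _ => f0_mem_Icc_of_mem_TH)
    ⟨_, pi_div_two_zero_mem_TH, f0_pi_div_two_zero⟩ ⟨_, pi_pi_mem_TH, f0_pi_pi⟩

theorem le_smoothingFactor (ω : ℝ) : 7 / 25 ≤ smoothingFactor ω := by
  rw [smoothingFactor_eq]
  -- the convex combination `16/25 (1 - 3ω/4) + 9/25 (4ω/3 - 1)` does not depend on `ω`
  linarith [le_abs_self (1 - ω * (3 / 4)), neg_abs_le (1 - ω * (4 / 3)),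
    le_max_left |1 - ω * (3 / 4)| |1 - ω * (4 / 3)|,
    le_max_right |1 - ω * (3 / 4)| |1 - ω * (4 / 3)|]

theorem smoothingFactor_optimal : smoothingFactor (24 / 25) = 7 / 25 := by
  rw [smoothingFactor_eq]
  norm_num [abs_of_nonneg, abs_of_nonpos]

theorem stmt_8 :
    sInf (Set.range smoothingFactor) = 7/25 ∧ smoothingFactor (24/25) = 7/25 :=
  ⟨IsLeast.csInf_eq ⟨⟨_, smoothingFactor_optimal⟩, forall_mem_range.2 le_smoothingFactor⟩,
    smoothingFactor_optimal⟩
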